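/- (Theorem 1, geometric decay) Under the hypotheses of Theorem 1 (n ≥ n', A symmetric n×n, A' symmetric n'×n', K an n×n' matrix, λ ≥ 0, α ∈ [0,1], ‖A‖₂·‖A'‖₂ < ε, and the iteration X⁽ᵗ⁺¹⁾ = (1−α)X⁽ᵗ⁾ + α·P_d(A X⁽ᵗ⁾ A' + λK)), for all t ≥ 0 one has ‖X⁽ᵗ⁺¹⁾ − X⁽ᵗ⁾‖_F ≤ (1−α+αε)ᵗ · ‖X⁽¹⁾ − X⁽⁰⁾‖_F. -/

import Mathlib

/-- The Frobenius norm of a real matrix. -/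
noncomputable def frobNorm {m p : Type*} [Fintype m] [Fintype p] (A : Matrix m p ℝ) : ℝ :=
  Real.sqrt (∑ i, ∑ j, (A i j) ^ 2)

/-- The spectral (ℓ₂ operator) norm of a real square matrix. -/
noncomputable def specNorm {m : Type*} [Fintype m] [DecidableEq m] (A : Matrix m m ℝ) : ℝ :=
  ‖Matrix.toEuclideanCLM (𝕜 := ℝ) A‖

/-- `Omega n n'` is the set of partial doubly stochastic matrices: real `n × n'` matrices
with row sums at most 1, column sums equal to 1, and nonnegative entries. -/
def Omega (n n' : ℕ) : Set (Matrix (Fin n) (Fin n') ℝ) :=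
  {X | (∀ i, ∑ j, X i j ≤ 1) ∧ (∀ j, ∑ i, X i j = 1) ∧ (∀ i j, 0 ≤ X i j)}

/-!
The map `T Y = P_d (A Y A' + λK)` is `‖A‖₂‖A'‖₂`-Lipschitz for the Frobenius norm: the metric
projection onto a convex set is nonexpansive (add the two variational inequalities), and
`‖A M A'‖_F ≤ ‖A‖₂ ‖M‖_F ‖A'‖₂` column by column. The averaged map `(1 - α) id + α T` is then a
`(1 - α + α ε)`-contraction, so consecutive differences of the iteration decay geometrically.
-/

open Matrix Set
open scoped InnerProductSpace

attribute [local instance] Matrix.frobeniusNormedAddCommGroup Matrix.frobeniusNormedSpace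

namespace Convex

variable {F : Type*} [NormedAddCommGroup F] [InnerProductSpace ℝ F] {s : Set F} {y z p q : F}

theorem inner_sub_nearest_le_zero (hs : Convex ℝ s) (hp : p ∈ s)
    (hp_min : ∀ d ∈ s, ‖y - p‖ ≤ ‖y - d‖) {d : F} (hd : d ∈ s) : ⟪y - p, d - p⟫_ℝ ≤ 0 := by
  have : Nonempty s := ⟨⟨p, hp⟩⟩
  have hinf : ‖y - p‖ = ⨅ w : s, ‖y - w‖ :=
    le_antisymm (le_ciInf fun w ↦ hp_min w w.2)
      (ciInf_le (f := fun w : s ↦ ‖y - w‖) ⟨0, by rintro _ ⟨w, rfl⟩; exact norm_nonneg _⟩ ⟨p, hp⟩)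
  exact (norm_eq_iInf_iff_real_inner_le_zero hs hp).mp hinf d hd

theorem norm_sub_nearest_le (hs : Convex ℝ s) (hp : p ∈ s) (hq : q ∈ s)
    (hp_min : ∀ d ∈ s, ‖y - p‖ ≤ ‖y - d‖) (hq_min : ∀ d ∈ s, ‖z - q‖ ≤ ‖z - d‖) :
    ‖p - q‖ ≤ ‖y - z‖ := by
  have hpq : ‖p - q‖ ^ 2 ≤ ‖y - z‖ * ‖p - q‖ := by
    have h₁ := hs.inner_sub_nearest_le_zero hp hp_min hq
    have h₂ := hs.inner_sub_nearest_le_zero hq hq_min hp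
    have hsum : ⟪y - p, q - p⟫_ℝ + ⟪z - q, p - q⟫_ℝ = ‖p - q‖ ^ 2 - ⟪y - z, p - q⟫_ℝ := by
      rw [← real_inner_self_eq_norm_sq, ← neg_sub p q, inner_neg_right, neg_add_eq_sub,
        ← inner_sub_left, ← inner_sub_left]
      congr 1; abel
    linarith [real_inner_le_norm (y - z) (p - q)]
  rcases (norm_nonneg (p - q)).eq_or_lt with h0 | h0
  · exact h0 ▸ norm_nonneg _
  · exact le_of_mul_le_mul_right (by rwa [← sq]) h0

end Convex

section Frobenius

variable {m p : Type*} [Fintype m] [Fintype p]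

theorem frobNorm_eq_norm (X : Matrix m p ℝ) : frobNorm X = ‖X‖ := by
  simp only [frobNorm, frobenius_norm_def, Real.norm_eq_abs, Real.rpow_two, sq_abs,
    Real.sqrt_eq_rpow]

theorem Matrix.frobenius_norm_sq_eq_sum_col (M : Matrix m p ℝ) :
    ‖M‖ ^ 2 = ∑ j, ‖WithLp.toLp 2 (Mᵀ j)‖ ^ 2 := by
  simp only [← frobNorm_eq_norm, frobNorm, EuclideanSpace.norm_sq_eq, Real.norm_eq_abs, sq_abs,
    transpose_apply]
  rw [Real.sq_sqrt (by positivity), Finset.sum_comm]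

noncomputable def Matrix.flattenₗᵢ : Matrix m p ℝ →ₗᵢ[ℝ] EuclideanSpace ℝ (m × p) where
  toFun X := WithLp.toLp 2 (Function.uncurry X)
  map_add' _ _ := rfl
  map_smul' _ _ := rfl
  norm_map' X := by
    change ‖WithLp.toLp 2 (Function.uncurry X)‖ = ‖X‖
    rw [EuclideanSpace.norm_eq, ← frobNorm_eq_norm, frobNorm, Fintype.sum_prod_type]
    simp only [Real.norm_eq_abs, sq_abs]
    rfl

theorem Convex.frobenius_norm_sub_nearest_le {s : Set (Matrix m p ℝ)} (hs : Convex ℝ s)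
    {P : Matrix m p ℝ → Matrix m p ℝ} (hP_mem : ∀ Y, P Y ∈ s)
    (hP_min : ∀ Y, ∀ D ∈ s, ‖Y - P Y‖ ≤ ‖Y - D‖) (Y Z : Matrix m p ℝ) :
    ‖P Y - P Z‖ ≤ ‖Y - Z‖ := by
  let f := Matrix.flattenₗᵢ (m := m) (p := p)
  have hmin : ∀ Y, ∀ d ∈ f '' s, ‖f Y - f (P Y)‖ ≤ ‖f Y - d‖ := by
    rintro Y _ ⟨D, hD, rfl⟩
    simpa only [← map_sub, LinearIsometry.norm_map] using hP_min Y D hD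
  simpa only [← map_sub, LinearIsometry.norm_map] using
    (hs.linear_image f.toLinearMap).norm_sub_nearest_le (mem_image_of_mem f (hP_mem Y))
      (mem_image_of_mem f (hP_mem Z)) (hmin Y) (hmin Z)

end Frobenius

theorem convex_omega (n n' : ℕ) : Convex ℝ (Omega n n') := by
  rintro X ⟨hX_row, hX_col, hX_nonneg⟩ Y ⟨hY_row, hY_col, hY_nonneg⟩ a b ha hb hab
  refine ⟨fun i ↦ ?_, fun j ↦ ?_, fun i j ↦ ?_⟩ <;>
    simp only [Matrix.add_apply, Matrix.smul_apply, smul_eq_mul, Finset.sum_add_distrib,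
      ← Finset.mul_sum]
  · nlinarith [hX_row i, hY_row i]
  · rw [hX_col j, hY_col j, mul_one, mul_one, hab]
  · have := hX_nonneg i j; have := hY_nonneg i j; positivity

section Spectral

variable {m p : Type*} [Fintype m] [DecidableEq m] [Fintype p]

theorem specNorm_nonneg (A : Matrix m m ℝ) : 0 ≤ specNorm A := norm_nonneg _

theorem specNorm_transpose (A : Matrix m m ℝ) : specNorm Aᵀ = specNorm A := by
  rw [specNorm, ← conjTranspose_eq_transpose_of_trivial]
  exact l2_opNorm_conjTranspose A

theorem Matrix.frobenius_norm_mul_le_specNorm_mul (A : Matrix m m ℝ) (M : Matrix m p ℝ) :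
    ‖A * M‖ ≤ specNorm A * ‖M‖ := by
  -- column `j` of `A * M`, i.e. `(A * M)ᵀ j`, is definitionally `A *ᵥ Mᵀ j`
  have hcol (j : p) : ‖WithLp.toLp 2 ((A * M)ᵀ j)‖ ≤ specNorm A * ‖WithLp.toLp 2 (Mᵀ j)‖ := by
    change ‖WithLp.toLp 2 (A *ᵥ Mᵀ j)‖ ≤ _
    rw [← toEuclideanCLM_toLp]
    exact (toEuclideanCLM (𝕜 := ℝ) A).le_opNorm _
  refine (pow_le_pow_iff_left₀ (norm_nonneg _)
    (mul_nonneg (specNorm_nonneg A) (norm_nonneg _)) two_ne_zero).mp ?_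
  rw [mul_pow, frobenius_norm_sq_eq_sum_col, frobenius_norm_sq_eq_sum_col, Finset.mul_sum]
  gcongr with j
  rw [← mul_pow]
  exact pow_le_pow_left₀ (norm_nonneg _) (hcol j) 2

theorem Matrix.frobenius_norm_mul_le_mul_specNorm (M : Matrix p m ℝ) (B : Matrix m m ℝ) :
    ‖M * B‖ ≤ ‖M‖ * specNorm B := by
  rw [← frobenius_norm_transpose, transpose_mul, ← frobenius_norm_transpose M, mul_comm,
    ← specNorm_transpose B]
  exact frobenius_norm_mul_le_specNorm_mul Bᵀ Mᵀ

end Spectral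

section AveragedIteration

variable {E : Type*} [SeminormedAddCommGroup E] [NormedSpace ℝ E] {T : E → E} {L α : ℝ}

theorem norm_averaged_sub_le (hα : α ∈ Icc 0 1) (hT : ∀ x y, ‖T x - T y‖ ≤ L * ‖x - y‖)
    (x y : E) :
    ‖((1 - α) • x + α • T x) - ((1 - α) • y + α • T y)‖ ≤ (1 - α + α * L) * ‖x - y‖ :=
  calc _ = ‖(1 - α) • (x - y) + α • (T x - T y)‖ := by congr 1; module
    _ ≤ (1 - α) * ‖x - y‖ + α * ‖T x - T y‖ := by
      refine (norm_add_le _ _).trans_eq ?_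
      rw [norm_smul_of_nonneg (sub_nonneg.2 hα.2), norm_smul_of_nonneg hα.1]
    _ ≤ (1 - α) * ‖x - y‖ + α * (L * ‖x - y‖) :=
      add_le_add_right (mul_le_mul_of_nonneg_left (hT x y) hα.1) _
    _ = (1 - α + α * L) * ‖x - y‖ := by ring

theorem norm_sub_averaged_iterate_le (hα : α ∈ Icc 0 1) (hL : 0 ≤ L)
    (hT : ∀ x y, ‖T x - T y‖ ≤ L * ‖x - y‖) (x : ℕ → E)
    (hx : ∀ t, x (t + 1) = (1 - α) • x t + α • T (x t)) (t : ℕ) :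
    ‖x (t + 1) - x t‖ ≤ (1 - α + α * L) ^ t * ‖x 1 - x 0‖ := by
  induction t with
  | zero => simp
  | succ t ih =>
    have hstep := norm_averaged_sub_le hα hT (x (t + 1)) (x t)
    rw [← hx, ← hx] at hstep
    have hrate : 0 ≤ 1 - α + α * L := by nlinarith [hα.1, hα.2]
    calc ‖x (t + 1 + 1) - x (t + 1)‖ ≤ (1 - α + α * L) * ‖x (t + 1) - x t‖ := hstep
      _ ≤ (1 - α + α * L) * ((1 - α + α * L) ^ t * ‖x 1 - x 0‖) := by gcongr
      _ = (1 - α + α * L) ^ (t + 1) * ‖x 1 - x 0‖ := by ring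

end AveragedIteration

theorem fastPFP_geometric_decay_general (n n' : ℕ)
    (A : Matrix (Fin n) (Fin n) ℝ)
    (A' : Matrix (Fin n') (Fin n') ℝ)
    (K : Matrix (Fin n) (Fin n') ℝ) (lam : ℝ)
    (α : ℝ) (hα : α ∈ Set.Icc (0 : ℝ) 1) (ε : ℝ)
    (hspec : specNorm A * specNorm A' < ε)
    (Pd : Matrix (Fin n) (Fin n') ℝ → Matrix (Fin n) (Fin n') ℝ)
    (hPd_mem : ∀ Y, Pd Y ∈ Omega n n')
    (hPd_min : ∀ Y, ∀ D ∈ Omega n n', frobNorm (Y - Pd Y) ≤ frobNorm (Y - D))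
    (X : ℕ → Matrix (Fin n) (Fin n') ℝ)
    (hX : ∀ t, X (t + 1) = (1 - α) • X t + α • Pd (A * X t * A' + lam • K))
    (t : ℕ) :
    frobNorm (X (t + 1) - X t) ≤ (1 - α + α * ε) ^ t * frobNorm (X 1 - X 0) := by
  simp only [frobNorm_eq_norm] at hPd_min ⊢
  have hPd_lip := (convex_omega n n').frobenius_norm_sub_nearest_le hPd_mem hPd_min
  have hspec_nonneg : 0 ≤ specNorm A * specNorm A' :=
    mul_nonneg (specNorm_nonneg A) (specNorm_nonneg A')
  refine norm_sub_averaged_iterate_le (T := fun Y ↦ Pd (A * Y * A' + lam • K)) hα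
    (hspec_nonneg.trans hspec.le) (fun Y Z ↦ ?_) X hX t
  calc ‖Pd (A * Y * A' + lam • K) - Pd (A * Z * A' + lam • K)‖ ≤ ‖A * (Y - Z) * A'‖ := by
        rw [Matrix.mul_sub, Matrix.sub_mul,
          ← add_sub_add_right_eq_sub (A * Y * A') (A * Z * A') (lam • K)]
        exact hPd_lip _ _
    _ ≤ ‖A * (Y - Z)‖ * specNorm A' := frobenius_norm_mul_le_mul_specNorm _ A'
    _ ≤ specNorm A * ‖Y - Z‖ * specNorm A' :=
        mul_le_mul_of_nonneg_right (frobenius_norm_mul_le_specNorm_mul A _) (specNorm_nonneg A')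
    _ ≤ ε * ‖Y - Z‖ := by
        rw [mul_right_comm]
        exact mul_le_mul_of_nonneg_right hspec.le (norm_nonneg _)

/-- (Theorem 1, geometric decay) Under the hypotheses of Theorem 1, the FastPFP iterates
satisfy `‖X⁽ᵗ⁺¹⁾ − X⁽ᵗ⁾‖_F ≤ (1−α+αε)ᵗ · ‖X⁽¹⁾ − X⁽⁰⁾‖_F` for all `t ≥ 0`. -/
theorem fastPFP_geometric_decay (n n' : ℕ) (hn' : 0 < n') (hnn : n' ≤ n)
    (A : Matrix (Fin n) (Fin n) ℝ) (hA : A.IsSymm)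
    (A' : Matrix (Fin n') (Fin n') ℝ) (hA' : A'.IsSymm)
    (K : Matrix (Fin n) (Fin n') ℝ) (lam : ℝ) (hlam : 0 ≤ lam)
    (α : ℝ) (hα : α ∈ Set.Icc (0 : ℝ) 1) (ε : ℝ) (hε : 0 < ε)
    (hspec : specNorm A * specNorm A' < ε)
    (Pd : Matrix (Fin n) (Fin n') ℝ → Matrix (Fin n) (Fin n') ℝ)
    (hPd_mem : ∀ Y, Pd Y ∈ Omega n n')
    (hPd_min : ∀ Y, ∀ D ∈ Omega n n', frobNorm (Y - Pd Y) ≤ frobNorm (Y - D))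
    (X : ℕ → Matrix (Fin n) (Fin n') ℝ)
    (hX : ∀ t, X (t + 1) = (1 - α) • X t + α • Pd (A * X t * A' + lam • K))
    (t : ℕ) :
    frobNorm (X (t + 1) - X t) ≤ (1 - α + α * ε) ^ t * frobNorm (X 1 - X 0) :=
  fastPFP_geometric_decay_general n n' A A' K lam α hα ε hspec Pd hPd_mem hPd_min X hX t
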